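/- Let H ∈ (0,1], γ ∈ (0,1], and T ∈ (0,∞), and define for 0 ≤ s ≤ t ≤ T the function V_Z²(s,t) = (1−γ) t^{2H} + (γ²−γ) s^{2H} + γ (t−s)^{2H}. Then V_Z attains its unique maximum over the set A = {(s,t) : 0 ≤ s ≤ t ≤ T} at the point (0,T); that is, V_Z²(s,t) < V_Z²(0,T) = T^{2H} for all (s,t) ∈ A with (s,t) ≠ (0,T). -/
import Mathlib


/-- The variance function `V_Z²(s,t)` of the Gaussian field `Z(s,t) = X_H(t) − γ X_H(s)`. -/
noncomputable def VZ2 (H γ s t : ℝ) : ℝ :=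
  (1 - γ) * t ^ (2*H) + (γ^2 - γ) * s ^ (2*H) + γ * (t - s) ^ (2*H)

/-- `V_Z` attains its unique maximum over `A = {0 ≤ s ≤ t ≤ T}` at `(0,T)`,
with `V_Z²(0,T) = T^{2H}`. -/
theorem VZ2_unique_max (H γ T : ℝ)
    (hH : H ∈ Set.Ioc (0:ℝ) 1) (hγ : γ ∈ Set.Ioc (0:ℝ) 1) (hT : 0 < T) :
    (∀ s t : ℝ, 0 ≤ s → s ≤ t → t ≤ T → (s, t) ≠ (0, T) →
      VZ2 H γ s t < VZ2 H γ 0 T) ∧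
    VZ2 H γ 0 T = T ^ (2*H) := by
  obtain ⟨hH0, hH1⟩ := hH
  obtain ⟨hγ0, hγ1⟩ := hγ
  have h2H : 0 < 2*H := by linarith
  have heq : VZ2 H γ 0 T = T ^ (2*H) := by
    simp [VZ2, Real.zero_rpow (ne_of_gt h2H)]
    ring
  refine ⟨?_, heq⟩
  intro s t hs hst htT hne
  rw [heq]
  unfold VZ2
  have hsp : 0 ≤ s ^ (2*H) := Real.rpow_nonneg hs _
  have ht0 : 0 ≤ t := le_trans hs hst
  have hts : 0 ≤ t - s := by linarith
  have h1 : (t-s)^(2*H) ≤ t^(2*H) := Real.rpow_le_rpow hts (by linarith) h2H.le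
  have hγγ : γ^2 - γ ≤ 0 := by nlinarith
  rcases lt_or_eq_of_le htT with hlt | heqT
  · have h2' : t^(2*H) < T^(2*H) := Real.rpow_lt_rpow ht0 hlt h2H
    have hm1 : (γ^2 - γ) * s^(2*H) ≤ 0 := mul_nonpos_of_nonpos_of_nonneg hγγ hsp
    have hm2 : γ * (t-s)^(2*H) ≤ γ * t^(2*H) :=
      mul_le_mul_of_nonneg_left h1 hγ0.le
    have hm3 : γ * t^(2*H) < γ * T^(2*H) := by
      exact mul_lt_mul_of_pos_left h2' hγ0
    have hm4 : (1-γ) * t^(2*H) ≤ (1-γ) * T^(2*H) :=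
      mul_le_mul_of_nonneg_left h2'.le (by linarith)
    nlinarith
  · subst heqT
    have hs' : 0 < s := by
      rcases lt_or_eq_of_le hs with h | h
      · exact h
      · exact absurd (by rw [← h]) hne
    rcases lt_or_eq_of_le hγ1 with hγlt | hγeq
    · have hm1 : (γ^2 - γ) * s^(2*H) < 0 :=
        mul_neg_of_neg_of_pos (by nlinarith) (Real.rpow_pos_of_pos hs' _)
      have hm2 : γ * (t-s)^(2*H) ≤ γ * t^(2*H) :=
        mul_le_mul_of_nonneg_left h1 hγ0.le
      nlinarith
    · subst hγeq
      have h1' : (t-s)^(2*H) < t^(2*H) :=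
        Real.rpow_lt_rpow hts (by linarith) h2H
      nlinarith
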